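/- Let P be a probability vector on a finite set X with positive entries, let ε > 0, and let L : X → ℝ with ‖L‖₂ = 1 (Euclidean norm). Then it is impossible that both L and -L satisfy ((e^{-ε}-1)/ε)·√(P(x)) ≤ L(x) ≤ ((e^{ε}-1)/ε)·√(P(x)) for all x. -/

import Mathlib

/-! The lower constraints for `L` and `-L` together give `|L x| ≤ c √(P x)` with
`c = (1 - e^{-ε}) / ε`, so `‖L‖₂² ≤ c² ∑ P = c²`. But `0 < c < 1` because `1 - ε < e^{-ε}`,
contradicting `‖L‖₂ = 1`. -/

theorem Finset.sum_sq_le_sq_mul_sum_of_abs_le_mul_sqrt {ι : Type*} (s : Finset ι) {f g : ι → ℝ}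
    {c : ℝ} (hg : ∀ i ∈ s, 0 ≤ g i) (hfg : ∀ i ∈ s, |f i| ≤ c * Real.sqrt (g i)) :
    ∑ i ∈ s, f i ^ 2 ≤ c ^ 2 * ∑ i ∈ s, g i := by
  rw [Finset.mul_sum]
  refine Finset.sum_le_sum fun i hi => ?_
  calc f i ^ 2 = |f i| ^ 2 := (sq_abs _).symm
    _ ≤ (c * Real.sqrt (g i)) ^ 2 := pow_le_pow_left₀ (abs_nonneg _) (hfg i hi) 2
    _ = c ^ 2 * g i := by rw [mul_pow, Real.sq_sqrt (hg i hi)]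

theorem Real.abs_exp_neg_sub_one_div_lt_one {ε : ℝ} (hε : 0 < ε) :
    |(Real.exp (-ε) - 1) / ε| < 1 := by
  rw [abs_lt, lt_div_iff₀ hε, div_lt_iff₀ hε]
  constructor
  · linarith [Real.add_one_lt_exp (neg_ne_zero.mpr hε.ne')]
  · linarith [Real.exp_lt_one_iff.mpr (neg_lt_zero.mpr hε)]

theorem not_both_feasible_lip {X : Type*} [Fintype X]
    (P : X → ℝ) (hPpos : ∀ x, 0 < P x) (hPsum : ∑ x, P x = 1)
    (ε : ℝ) (hε : 0 < ε)
    (L : X → ℝ) (hL : Real.sqrt (∑ x, (L x) ^ 2) = 1) :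
    ¬ ((∀ x, ((Real.exp (-ε) - 1) / ε) * Real.sqrt (P x) ≤ L x ∧
              L x ≤ ((Real.exp ε - 1) / ε) * Real.sqrt (P x)) ∧
       (∀ x, ((Real.exp (-ε) - 1) / ε) * Real.sqrt (P x) ≤ -L x ∧
              -L x ≤ ((Real.exp ε - 1) / ε) * Real.sqrt (P x))) := by
  rintro ⟨hL_feasible, hnegL_feasible⟩
  set a := (Real.exp (-ε) - 1) / ε
  have hbound : ∀ x ∈ Finset.univ, |L x| ≤ -a * Real.sqrt (P x) := fun x _ =>
    abs_le.mpr ⟨by linarith [(hL_feasible x).1], by linarith [(hnegL_feasible x).1]⟩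
  have hsum := Finset.univ.sum_sq_le_sq_mul_sum_of_abs_le_mul_sqrt
    (fun x _ => (hPpos x).le) hbound
  rw [hPsum, mul_one, neg_sq, Real.sqrt_eq_one.mp hL] at hsum
  have ha : a ^ 2 < 1 := (sq_lt_one_iff_abs_lt_one a).mpr (Real.abs_exp_neg_sub_one_div_lt_one hε)
  linarith
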